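/- Let $q = 2^{2m+1}$, $m \geq 1$, $\pi(x) = x^{2^{m+1}}$ on $GF(q)$, and let $GF(s) \subseteq GF(q)$ be a subfield with $s = 2^{2p+1}$, $s^t = q$. If $c \in GF(q)$ satisfies $c + \pi(c) \in GF(s)$, then $c \in GF(s)$. -/

import Mathlib

/-!
Let `σ = Frob^(m+1)` and `φ = Frob^(2p+1)`; the subfield `K` is exactly the fixed field of `φ`.
Since `σ c - c = c + σ c ∈ K` and `σ` preserves `K`, every `σ^j c - c` lies in `K`. On `GF(q)`
we have `σ^(2(2p+1)) = Frob^((2p+1)(2m+2)) = φ`, so `b := φ c - c ∈ K` is fixed by `φ`, whence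
`φ^j c = c + j b`. For `j = t` the left side is `Frob^(2m+1) c = c`, and `t` is odd, so `b = 0`
in characteristic 2.
-/

open Polynomial

theorem Subfield.mem_iff_pow_card_eq_self {F : Type*} [Field F] (K : Subfield F) [Finite K]
    {x : F} : x ∈ K ↔ x ^ Nat.card K = x := by
  have := Fintype.ofFinite K
  have hsplit : Splits (X ^ Fintype.card K - X : K[X]) := by
    rw [splits_iff_card_roots, FiniteField.roots_X_pow_card_sub_X, ← Finset.card_def,
      Finset.card_univ, FiniteField.X_pow_card_sub_X_natDegree_eq _ Fintype.one_lt_card]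
  have hroots : (X ^ Fintype.card K - X : F[X]).roots = Finset.univ.val.map K.subtype := by
    rw [← FiniteField.roots_X_pow_card_sub_X K, ← hsplit.roots_map]
    simp
  have hx := mem_roots (a := x)
    (FiniteField.X_pow_card_sub_X_ne_zero F (Fintype.one_lt_card (α := K)))
  rw [hroots] at hx
  rw [← Fintype.card_eq_nat_card]
  simpa [sub_eq_zero] using hx

theorem FiniteField.pow_pow_eq_of_modEq {F : Type*} [Field F] [Finite F] {p n a b : ℕ}
    (hF : Nat.card F = p ^ n) (hab : a ≡ b [MOD n]) (x : F) : x ^ p ^ a = x ^ p ^ b := by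
  have := Fintype.ofFinite F
  have hmod (a : ℕ) : x ^ p ^ a = x ^ p ^ (a % n) := by
    conv_lhs => rw [← Nat.div_add_mod a n, pow_add, pow_mul, pow_mul, ← hF,
      ← Fintype.card_eq_nat_card, FiniteField.pow_card_pow]
  rw [hmod a, hmod b, hab]

theorem AddSubgroup.iterate_apply_sub_self_mem {M : Type*} [AddCommGroup M] (f : M →+ M)
    {K : AddSubgroup M} (hf : ∀ x ∈ K, f x ∈ K) {c : M} (hc : f c - c ∈ K) (j : ℕ) :
    f^[j] c - c ∈ K := by
  induction j with
  | zero => simp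
  | succ j ih =>
    have h : f^[j + 1] c - c = f (f^[j] c - c) + (f c - c) := by
      rw [Function.iterate_succ_apply', map_sub]
      abel
    exact h ▸ add_mem (hf _ ih) hc

theorem AddMonoidHom.iterate_apply_eq_add_nsmul {M : Type*} [AddCommMonoid M] (f : M →+ M)
    {b c : M} (hb : f b = b) (hc : f c = c + b) (j : ℕ) : f^[j] c = c + j • b := by
  induction j with
  | zero => simp
  | succ j ih => rw [Function.iterate_succ_apply', ih, map_add, map_nsmul, hb, hc, succ_nsmul,
      add_assoc, add_comm b]

theorem AddMonoidHom.apply_eq_self_of_iterate_odd {R : Type*} [Ring R] [CharP R 2] (f : R →+ R)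
    {c : R} (hfix : f (f c - c) = f c - c) {t : ℕ} (ht : Odd t) (hct : f^[t] c = c) :
    f c = c := by
  have h := f.iterate_apply_eq_add_nsmul hfix (add_sub_cancel c (f c)).symm t
  rw [hct, nsmul_eq_mul, natCast_eq_one_of_odd_of_two_eq_zero ht CharTwo.two_eq_zero, one_mul,
    left_eq_add, sub_eq_zero] at h
  exact h

theorem stmt3_general (m p t : ℕ) (ht : (2*p+1) * t = 2*m+1)
    (K : Subfield (GaloisField 2 (2*m+1))) (hK : Nat.card K = 2 ^ (2*p+1))
    (c : GaloisField 2 (2*m+1)) (hc : c + c ^ (2 ^ (m+1)) ∈ K) :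
    c ∈ K := by
  have hF : Nat.card (GaloisField 2 (2*m+1)) = 2 ^ (2*m+1) :=
    GaloisField.card 2 (2*m+1) (by omega)
  have : Finite K := Nat.finite_of_card_ne_zero (by simp [hK])
  set φ := iterateFrobenius (GaloisField 2 (2*m+1)) 2 (2*p+1)
  set σ := iterateFrobenius (GaloisField 2 (2*m+1)) 2 (m+1)
  have hσφ : σ^[2*(2*p+1)] c = φ c := by
    rw [← coe_iterateFrobenius_mul, iterateFrobenius_def, iterateFrobenius_def]
    refine FiniteField.pow_pow_eq_of_modEq hF ?_ c
    rw [show (m+1) * (2*(2*p+1)) = (2*p+1) + (2*m+1) * (2*p+1) by ring]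
    exact Nat.add_mul_mod_self_left _ _ _
  have hφt : φ^[t] c = c := by
    rw [← coe_iterateFrobenius_mul, iterateFrobenius_def, ht]
    simpa using FiniteField.pow_pow_eq_of_modEq hF (Nat.modEq_zero_iff_dvd.2 dvd_rfl) c
  have hσc : σ c - c ∈ K := by
    rw [CharTwo.sub_eq_add, add_comm (σ c)]
    exact hc
  have hφc : φ c - c ∈ K :=
    hσφ ▸ AddSubgroup.iterate_apply_sub_self_mem σ.toAddMonoidHom (K := K.toAddSubgroup)
      (fun x hx => K.pow_mem hx _) hσc (2*(2*p+1))
  have hφb : φ (φ c - c) = φ c - c := by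
    rw [iterateFrobenius_def, ← hK, ← K.mem_iff_pow_card_eq_self]
    exact hφc
  have hodd : Odd t := (Nat.odd_mul.1 (ht ▸ odd_two_mul_add_one m)).2
  rw [K.mem_iff_pow_card_eq_self, hK]
  exact φ.toAddMonoidHom.apply_eq_self_of_iterate_odd hφb hodd hφt

/-- For `q = 2^(2m+1)`, `π : x ↦ x^(2^(m+1))` and `GF(s) ⊆ GF(q)` a subfield with
    `s = 2^(2p+1)`, `s^t = q`: if `c + π c` lies in the subfield then so does `c`. -/
theorem stmt3 (m p t : ℕ) (hm : 1 ≤ m) (ht : (2*p+1) * t = 2*m+1)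
    (K : Subfield (GaloisField 2 (2*m+1))) (hK : Nat.card K = 2 ^ (2*p+1))
    (c : GaloisField 2 (2*m+1)) (hc : c + c ^ (2 ^ (m+1)) ∈ K) :
    c ∈ K :=
  stmt3_general m p t ht K hK c hc
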